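/- For every finite mixture (γ_1,…,γ_P) and all ε, ε', η, C > 0 there exists δ > 0 such that the following holds for every N ≥ 1: if P ⊆ ℝ^N is a polytope presented by half-spaces and contained in the unit ball {x : |x|₂ ≤ 1}, and H : ℝ^N → ℝ satisfies the C-derivative bounds and is (ε,δ)-superb for P, then every x ∈ P with H(x) ≥ max_{y ∈ P} H(y) − √ε·∫_{|x|₂²}^{|x|₂²+ε'} ζ(t) dt + η admits an ε-corner x̂ of P with |x − x̂|₂² ≤ ε'. -/

import Mathlib

/-- Second derivative `ξ''(t) = ∑_{p=1}^P γ_p² p(p-1) t^{p-2}` of the mixture function. -/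
noncomputable def xiSecond (Pd : ℕ) (γ : ℕ → ℝ) (t : ℝ) : ℝ :=
  ∑ p ∈ Finset.Icc 1 Pd, (γ p) ^ 2 * ((p : ℝ) * ((p : ℝ) - 1)) * t ^ (p - 2)

/-- `ζ(t) = √(ξ''(t))`. -/
noncomputable def zeta (Pd : ℕ) (γ : ℕ → ℝ) (t : ℝ) : ℝ :=
  Real.sqrt (xiSecond Pd γ t)

/-- The normalized inner product `⟨a,·⟩ = (∑ i, a i * v i)/N` as a linear functional. -/
noncomputable def dotL {N : ℕ} (a : Fin N → ℝ) : (Fin N → ℝ) →ₗ[ℝ] ℝ where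
  toFun v := (∑ i, a i * v i) / N
  map_add' v w := by
    simp [Pi.add_apply, mul_add, Finset.sum_add_distrib, add_div]
  map_smul' c v := by
    simp only [Pi.smul_apply, smul_eq_mul, RingHom.id_apply]
    rw [show (∑ x : Fin N, a x * (c * v x)) = c * ∑ i, a i * v i by
      rw [Finset.mul_sum]; exact Finset.sum_congr rfl fun i _ => by ring]
    ring

/-- The polytope `{x : ⟨a_j, x⟩ ≤ b_j for all j}` presented by half-spaces. -/
def Pset {N : ℕ} {J : Type*} (a : J → Fin N → ℝ) (b : J → ℝ) : Set (Fin N → ℝ) :=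
  {x | ∀ j, dotL (a j) x ≤ b j}

/-- `U(x)`: the tangent space of the minimal face of the polytope containing `x`, i.e. the
intersection of the kernels of the constraints active at `x`. -/
noncomputable def Uspace {N : ℕ} {J : Type*} (a : J → Fin N → ℝ) (b : J → ℝ)
    (x : Fin N → ℝ) : Submodule ℝ (Fin N → ℝ) :=
  ⨅ j ∈ {j | dotL (a j) x = b j}, LinearMap.ker (dotL (a j))

/-- `H` is `(ε,δ)`-superb for the polytope: for every `x` in the polytope and every `y` in the
polytope with `dim U(y) ≥ εN` there is a 2-dimensional subspace `V ⊆ U(y) ∩ x^⊥` on which the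
(normalized) Hessian quadratic form at `x` is at least `2ζ(|x|₂²)√ε − δ`. -/
def IsSuperb {N : ℕ} {J : Type*} [Fintype J] (Pd : ℕ) (γ : ℕ → ℝ) (ε δ : ℝ)
    (a : J → Fin N → ℝ) (b : J → ℝ) (H : (Fin N → ℝ) → ℝ) : Prop :=
  ∀ x ∈ Pset a b, ∀ y ∈ Pset a b,
    ε * N ≤ (Module.finrank ℝ (Uspace a b y) : ℝ) →
    ∃ V : Submodule ℝ (Fin N → ℝ), Module.finrank ℝ V = 2 ∧ V ≤ Uspace a b y ∧
      (∀ w ∈ V, (∑ i, w i * x i) = 0) ∧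
      ∀ w ∈ V, (2 * zeta Pd γ ((∑ i, (x i) ^ 2) / N) * Real.sqrt ε - δ) * (∑ i, (w i) ^ 2) ≤
        (N : ℝ) * iteratedFDeriv ℝ 2 H x ![w, w]

/-- `H` satisfies the `C`-derivative bounds: it is three times continuously differentiable and
its directional derivatives of orders 1, 2, 3 along unit directions (in the normalized norm)
are bounded by `C` on the unit ball. -/
def DerivBounds (N : ℕ) (C : ℝ) (H : (Fin N → ℝ) → ℝ) : Prop :=
  ContDiff ℝ 3 H ∧
  ∀ σ : Fin N → ℝ, (∑ i, (σ i) ^ 2) / N ≤ 1 →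
    ∀ v : Fin N → ℝ, (∑ i, (v i) ^ 2) = (N : ℝ) →
      |fderiv ℝ H σ v| ≤ C ∧ |iteratedFDeriv ℝ 2 H σ ![v, v]| ≤ C ∧
        |iteratedFDeriv ℝ 3 H σ ![v, v, v]| ≤ C

/-!
Consider the points `σ` of the polytope with `|σ - x|₂² ≤ ε'`, `|σ|₂² = |x|₂² + |σ - x|₂²` and
`H σ ≥ H x + √ε ∫_{|x|₂²}^{|σ|₂²} ζ - 2δ |σ - x|₂²`; they form a compact set containing `x`, so
one of them, `σ`, is farthest from `x`. It cannot be at squared distance `ε'`: there `H` would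
exceed `max H`, since `2δε' < η`.
If `σ` is not an `ε`-corner, superbness gives a plane in `U(σ) ∩ σ^⊥` on which the Hessian is at
least `2ζ√ε - δ`; in that plane some direction is also orthogonal to `x` and not a descent
direction. A short step along it stays in the polytope, preserves `|σ|₂² = |x|₂² + |σ - x|₂²`, and
by Taylor's theorem (the third derivative is bounded by `C`) raises `H` by `(ζ√ε - δ)Δ` for a
squared length `Δ`; by continuity of `ζ` this pays for the integral up to `δΔ`. The new point
is farther from `x`, a contradiction.
-/

open Matrix Set Filter Topology

noncomputable def avgSq {N : ℕ} (v : Fin N → ℝ) : ℝ := (∑ i, v i ^ 2) / N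

section AvgSq

variable {N : ℕ}

lemma avgSq_nonneg (v : Fin N → ℝ) : 0 ≤ avgSq v := by
  unfold avgSq; positivity

lemma avgSq_pos (hN : 0 < (N : ℝ)) {v : Fin N → ℝ} (hv : v ≠ 0) : 0 < avgSq v := by
  obtain ⟨i, hi⟩ := Function.ne_iff.1 hv
  exact div_pos (Finset.sum_pos' (fun j _ => sq_nonneg (v j))
    ⟨i, Finset.mem_univ i, sq_pos_of_ne_zero hi⟩) hN

@[fun_prop]
lemma continuous_avgSq : Continuous (avgSq : (Fin N → ℝ) → ℝ) := by
  unfold avgSq; fun_prop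

@[simp]
lemma avgSq_zero : avgSq (0 : Fin N → ℝ) = 0 := by
  simp [avgSq]

lemma avgSq_smul (c : ℝ) (v : Fin N → ℝ) : avgSq (c • v) = c ^ 2 * avgSq v := by
  simp only [avgSq, Pi.smul_apply, smul_eq_mul, mul_pow, ← Finset.mul_sum, mul_div_assoc]

lemma avgSq_sub_comm (v w : Fin N → ℝ) : avgSq (v - w) = avgSq (w - v) := by
  simp only [avgSq, Pi.sub_apply, sq, ← neg_sub (v _) (w _), neg_mul_neg]

lemma avgSq_add_of_dotProduct_eq_zero {u v : Fin N → ℝ} (h : u ⬝ᵥ v = 0) :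
    avgSq (v + u) = avgSq v + avgSq u := by
  have hsum : ∑ i, (v + u) i ^ 2 = ∑ i, v i ^ 2 + ∑ i, u i ^ 2 + 2 * (u ⬝ᵥ v) := by
    simp only [dotProduct, Pi.add_apply, Finset.mul_sum, ← Finset.sum_add_distrib]
    exact Finset.sum_congr rfl fun i _ => by ring
  rw [avgSq, hsum, h, avgSq, avgSq]
  ring

lemma avgSq_add_sub {σ u x : Fin N → ℝ} (huσ : u ⬝ᵥ σ = 0) (hux : u ⬝ᵥ x = 0) :
    avgSq (σ + u - x) = avgSq (σ - x) + avgSq u := by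
  rw [add_sub_right_comm, avgSq_add_of_dotProduct_eq_zero]
  rw [dotProduct_sub, huσ, hux, sub_zero]

lemma exists_avgSq_eq_one_smul (hN : 0 < (N : ℝ)) (u : Fin N → ℝ) :
    ∃ v, avgSq v = 1 ∧ u = √(avgSq u) • v := by
  by_cases hu : u = 0
  · refine ⟨fun _ => 1, ?_, by simp [hu]⟩
    simp [avgSq, hN.ne']
  · have hs : 0 < √(avgSq u) := Real.sqrt_pos.2 (avgSq_pos hN hu)
    refine ⟨(√(avgSq u))⁻¹ • u, ?_, by rw [smul_inv_smul₀ hs.ne']⟩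
    rw [avgSq_smul, inv_pow, Real.sq_sqrt (avgSq_nonneg u), inv_mul_cancel₀ (avgSq_pos hN hu).ne']

lemma isBounded_setOf_avgSq_le (hN : 0 < (N : ℝ)) (R : ℝ) :
    Bornology.IsBounded {v : Fin N → ℝ | avgSq v ≤ R} := by
  refine isBounded_iff_forall_norm_le.2 ⟨√(N * R), fun v hv => ?_⟩
  refine (pi_norm_le_iff_of_nonneg (Real.sqrt_nonneg _)).2 fun i => ?_
  have hsum : ∑ j, v j ^ 2 ≤ N * R := by
    rw [← div_le_iff₀' hN]; exact hv
  exact Real.abs_le_sqrt ((Finset.single_le_sum (fun j _ => sq_nonneg (v j))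
    (Finset.mem_univ i)).trans hsum)

end AvgSq

section Polytope

variable {N : ℕ} {J : Type*} (a : J → Fin N → ℝ) (b : J → ℝ)

lemma Pset_eq_iInter : Pset a b = ⋂ j, {x | dotL (a j) x ≤ b j} := by
  ext x; simp [Pset]

lemma isClosed_Pset : IsClosed (Pset a b) := by
  rw [Pset_eq_iInter]
  exact isClosed_iInter fun j =>
    isClosed_le (LinearMap.continuous_of_finiteDimensional _) continuous_const

lemma convex_Pset : Convex ℝ (Pset a b) := by
  rw [Pset_eq_iInter]
  exact convex_iInter fun j => convex_halfSpace_le (dotL (a j)).isLinear (b j)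

variable {a b}

lemma mem_Uspace_iff {x w : Fin N → ℝ} :
    w ∈ Uspace a b x ↔ ∀ j, dotL (a j) x = b j → dotL (a j) w = 0 := by
  simp [Uspace, Submodule.mem_iInf]

lemma eventually_add_smul_mem_Pset [Finite J] {σ w : Fin N → ℝ} (hσ : σ ∈ Pset a b)
    (hw : w ∈ Uspace a b σ) : ∀ᶠ t in 𝓝 (0 : ℝ), σ + t • w ∈ Pset a b := by
  refine eventually_all.2 fun j => ?_
  rcases (hσ j).eq_or_lt with hj | hj
  · refine Eventually.of_forall fun t => ?_
    rw [map_add, map_smul, mem_Uspace_iff.1 hw j hj, smul_zero, add_zero, hj]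
  · have hcont : Continuous fun t : ℝ => dotL (a j) (σ + t • w) :=
      (LinearMap.continuous_of_finiteDimensional _).comp (by fun_prop)
    exact (hcont.continuousAt.eventually_lt continuousAt_const (by simpa using hj)).mono
      fun t ht => ht.le

end Polytope

section Taylor

lemma nonneg_of_hasDerivAt_nonneg {f f' : ℝ → ℝ} (hf : ∀ t, HasDerivAt f (f' t) t)
    (h₀ : 0 ≤ f 0) (hf' : ∀ t ∈ Icc (0 : ℝ) 1, 0 ≤ f' t) : ∀ t ∈ Icc (0 : ℝ) 1, 0 ≤ f t := by
  have hmono : MonotoneOn f (Icc 0 1) :=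
    monotoneOn_of_deriv_nonneg (convex_Icc 0 1) (fun t _ => (hf t).continuousAt.continuousWithinAt)
      (fun t _ => (hf t).differentiableAt.differentiableWithinAt)
      (fun t ht => (hf t).deriv ▸ hf' t (interior_subset ht))
  exact fun t ht => h₀.trans (hmono (left_mem_Icc.2 zero_le_one) ht ht.1)

lemma taylor_two_sub_le_of_hasDerivAt {g g₁ g₂ g₃ : ℝ → ℝ} {M : ℝ}
    (hg : ∀ t, HasDerivAt g (g₁ t) t) (hg₁ : ∀ t, HasDerivAt g₁ (g₂ t) t)
    (hg₂ : ∀ t, HasDerivAt g₂ (g₃ t) t) (hM : ∀ t ∈ Icc (0 : ℝ) 1, -M ≤ g₃ t) :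
    g 0 + g₁ 0 + g₂ 0 / 2 - M / 6 ≤ g 1 := by
  have h₂ := nonneg_of_hasDerivAt_nonneg (f := fun t => g₂ t - g₂ 0 + M * t)
    (f' := fun t => g₃ t + M)
    (fun t => ((hg₂ t).sub_const (g₂ 0)).add ((hasDerivAt_id' t).const_mul M) |>.congr_deriv
      (by ring))
    (by simp) (fun t ht => by linarith [hM t ht])
  have h₁ := nonneg_of_hasDerivAt_nonneg (f := fun t => g₁ t - g₁ 0 - g₂ 0 * t + M / 2 * t ^ 2)
    (f' := fun t => g₂ t - g₂ 0 + M * t)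
    (fun t => (((hg₁ t).sub_const (g₁ 0)).sub ((hasDerivAt_id' t).const_mul (g₂ 0))).add
        ((hasDerivAt_pow 2 t).const_mul (M / 2)) |>.congr_deriv (by push_cast; ring))
    (by simp) (fun t ht => by linarith [h₂ t ht])
  have h₀ := nonneg_of_hasDerivAt_nonneg
    (f := fun t => g t - g 0 - g₁ 0 * t - g₂ 0 / 2 * t ^ 2 + M / 6 * t ^ 3)
    (f' := fun t => g₁ t - g₁ 0 - g₂ 0 * t + M / 2 * t ^ 2)
    (fun t => ((((hg t).sub_const (g 0)).sub ((hasDerivAt_id' t).const_mul (g₁ 0))).sub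
        ((hasDerivAt_pow 2 t).const_mul (g₂ 0 / 2))).add
        ((hasDerivAt_pow 3 t).const_mul (M / 6)) |>.congr_deriv (by push_cast; ring))
    (by simp) (fun t ht => by linarith [h₁ t ht]) 1 (right_mem_Icc.2 zero_le_one)
  norm_num at h₀
  linarith

variable {E F : Type*} [NormedAddCommGroup E] [NormedSpace ℝ E] [NormedAddCommGroup F]
  [NormedSpace ℝ F]

lemma hasDerivAt_iteratedFDeriv_line {H : E → F} {n : ℕ}
    (hH : Differentiable ℝ (iteratedFDeriv ℝ n H)) (σ u : E) (t : ℝ) :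
    HasDerivAt (fun s : ℝ => iteratedFDeriv ℝ n H (σ + s • u) fun _ => u)
      (iteratedFDeriv ℝ (n + 1) H (σ + t • u) fun _ => u) t := by
  have hline : HasDerivAt (fun s : ℝ => σ + s • u) u t := by
    simpa using ((hasDerivAt_id' t).smul_const u).const_add σ
  have := (ContinuousMultilinearMap.apply ℝ (fun _ : Fin n => E) F fun _ => u).hasFDerivAt
    |>.comp_hasDerivAt t ((hH _).hasFDerivAt.comp_hasDerivAt t hline)
  rwa [iteratedFDeriv_succ_apply_left]

lemma ContDiff.taylor_two_sub_le {H : E → ℝ} (hH : ContDiff ℝ 3 H) (σ u : E) {M : ℝ}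
    (hM : ∀ s ∈ Icc (0 : ℝ) 1, |iteratedFDeriv ℝ 3 H (σ + s • u) fun _ => u| ≤ M) :
    H σ + fderiv ℝ H σ u + (iteratedFDeriv ℝ 2 H σ fun _ => u) / 2 - M / 6 ≤ H (σ + u) := by
  have hd : ∀ n : ℕ, n < 3 → ∀ t, HasDerivAt
      (fun s : ℝ => iteratedFDeriv ℝ n H (σ + s • u) fun _ => u)
      (iteratedFDeriv ℝ (n + 1) H (σ + t • u) fun _ => u) t := fun n hn =>
    hasDerivAt_iteratedFDeriv_line (hH.differentiable_iteratedFDeriv (by exact_mod_cast hn)) σ u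
  have := taylor_two_sub_le_of_hasDerivAt (hd 0 (by norm_num)) (hd 1 (by norm_num))
    (hd 2 (by norm_num)) fun t ht => neg_le_of_abs_le (hM t ht)
  simpa [iteratedFDeriv_one_apply] using this

end Taylor

lemma ContinuousMultilinearMap.apply_const_smul {n : ℕ} {E : Type*} [AddCommGroup E] [Module ℝ E]
    [TopologicalSpace E] (f : ContinuousMultilinearMap ℝ (fun _ : Fin n => E) ℝ) (c : ℝ) (v : E) :
    (f fun _ => c • v) = c ^ n * f fun _ => v := by
  simpa using f.map_smul_univ (fun _ => c) fun _ => v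

lemma ContinuousMultilinearMap.abs_apply_const_le {n N : ℕ} (hN : 0 < (N : ℝ))
    (f : ContinuousMultilinearMap ℝ (fun _ : Fin n => Fin N → ℝ) ℝ) {C : ℝ}
    (hf : ∀ v, avgSq v = 1 → |f fun _ => v| ≤ C) (u : Fin N → ℝ) :
    |f fun _ => u| ≤ C * √(avgSq u) ^ n := by
  obtain ⟨v, hv, hu⟩ := exists_avgSq_eq_one_smul hN u
  set s := √(avgSq u)
  rw [hu, f.apply_const_smul, abs_mul, abs_pow, abs_of_nonneg (Real.sqrt_nonneg _), mul_comm]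
  exact mul_le_mul_of_nonneg_right (hf v hv) (by positivity)

lemma DerivBounds.abs_iteratedFDeriv_three_le {N : ℕ} {C : ℝ} {H : (Fin N → ℝ) → ℝ}
    (hH : DerivBounds N C H) (hN : 0 < (N : ℝ)) {σ : Fin N → ℝ} (hσ : avgSq σ ≤ 1)
    (u : Fin N → ℝ) : |iteratedFDeriv ℝ 3 H σ fun _ => u| ≤ C * √(avgSq u) ^ 3 := by
  refine (iteratedFDeriv ℝ 3 H σ).abs_apply_const_le hN (fun v hv => ?_) u
  have hv' : ∑ i, v i ^ 2 = N := (div_eq_one_iff_eq hN.ne').1 hv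
  have hvec : ![v, v, v] = fun _ => v := by ext i; fin_cases i <;> rfl
  simpa [hvec] using (hH.2 σ hσ v hv').2.2

lemma continuous_zeta (Pd : ℕ) (γ : ℕ → ℝ) : Continuous (zeta Pd γ) :=
  Real.continuous_sqrt.comp (by unfold xiSecond; fun_prop)

lemma Continuous.exists_pos_intervalIntegral_le {f : ℝ → ℝ} (hf : Continuous f) (r : ℝ) {ω : ℝ}
    (hω : 0 < ω) : ∃ Δ₀ > 0, ∀ Δ ∈ Icc 0 Δ₀, ∫ t in r..r + Δ, f t ≤ (f r + ω) * Δ := by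
  obtain ⟨Δ₀, hΔ₀, hclose⟩ := Metric.continuous_iff.1 hf r ω hω
  refine ⟨Δ₀ / 2, by positivity, fun Δ hΔ => ?_⟩
  have hle : ∀ t ∈ Icc r (r + Δ), f t ≤ f r + ω := fun t ht => by
    have := hclose t (by rw [Real.dist_eq, abs_lt]; constructor <;> linarith [ht.1, ht.2, hΔ.2])
    rw [Real.dist_eq, abs_lt] at this
    linarith
  calc ∫ t in r..r + Δ, f t ≤ ∫ _ in r..r + Δ, (f r + ω) :=
        intervalIntegral.integral_mono_on (by linarith [hΔ.1]) (hf.intervalIntegrable _ _)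
          intervalIntegrable_const hle
    _ = (f r + ω) * Δ := by simp; ring

lemma Submodule.exists_mem_ne_zero_eq_zero_nonneg {E : Type*} [AddCommGroup E] [Module ℝ E]
    (V : Submodule ℝ E) (hV : 1 < Module.finrank ℝ V) (φ ψ : E →ₗ[ℝ] ℝ) :
    ∃ w ∈ V, w ≠ 0 ∧ φ w = 0 ∧ 0 ≤ ψ w := by
  have : FiniteDimensional ℝ V := Module.finite_of_finrank_pos (by omega)
  obtain ⟨w, hwker, hw0⟩ := Submodule.exists_mem_ne_zero_of_ne_bot
    (LinearMap.ker_ne_bot_of_finrank_lt (f := φ.comp V.subtype) (by simpa using hV))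
  have hw0' : (w : E) ≠ 0 := by simpa using hw0
  have hφ : φ w = 0 := hwker
  rcases le_total 0 (ψ w) with hψ | hψ
  · exact ⟨w, w.2, hw0', hφ, hψ⟩
  · exact ⟨-w, V.neg_mem w.2, neg_ne_zero.2 hw0', by simp [hφ], by simpa using hψ⟩

def ascentSet {N : ℕ} {J : Type*} (a : J → Fin N → ℝ) (b : J → ℝ) (H : (Fin N → ℝ) → ℝ)
    (f : ℝ → ℝ) (κ c ρ : ℝ) (x : Fin N → ℝ) : Set (Fin N → ℝ) :=
  {σ | σ ∈ Pset a b ∧ avgSq (σ - x) ≤ ρ ∧ avgSq σ = avgSq x + avgSq (σ - x) ∧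
    H x + κ * (∫ t in avgSq x..avgSq σ, f t) - c * avgSq (σ - x) ≤ H σ}

section AscentSet

variable {N : ℕ} {J : Type*} {a : J → Fin N → ℝ} {b : J → ℝ} {H : (Fin N → ℝ) → ℝ}
  {f : ℝ → ℝ} {κ c ρ : ℝ} {x : Fin N → ℝ}

lemma self_mem_ascentSet (hx : x ∈ Pset a b) (hρ : 0 ≤ ρ) : x ∈ ascentSet a b H f κ c ρ x := by
  simp [ascentSet, hx, hρ]

lemma isCompact_ascentSet (hN : 0 < (N : ℝ)) (hball : Pset a b ⊆ {σ | avgSq σ ≤ 1})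
    (hH : Continuous H) (hf : Continuous f) : IsCompact (ascentSet a b H f κ c ρ x) := by
  have hint : Continuous fun σ : Fin N → ℝ => ∫ t in avgSq x..avgSq σ, f t :=
    (intervalIntegral.continuous_primitive (fun _ _ => hf.intervalIntegrable _ _) _).comp
      continuous_avgSq
  refine Metric.isCompact_of_isClosed_isBounded ?_
    ((isBounded_setOf_avgSq_le hN 1).subset fun σ hσ => hball hσ.1)
  simp only [ascentSet, ofPred_and, ofPred_mem_eq]
  exact (isClosed_Pset a b).inter ((isClosed_le (by fun_prop) continuous_const).inter
    ((isClosed_eq continuous_avgSq (by fun_prop)).inter (isClosed_le (by fun_prop) hH)))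

lemma avgSq_sub_lt_of_mem_ascentSet {η : ℝ}
    (hmax : ∀ y ∈ Pset a b, H y ≤ H x + κ * (∫ t in avgSq x..avgSq x + ρ, f t) - η)
    (hcρ : c * ρ < η) {σ : Fin N → ℝ} (hσ : σ ∈ ascentSet a b H f κ c ρ x) :
    avgSq (σ - x) < ρ := by
  obtain ⟨hσP, hσρ, hσx, hσH⟩ := hσ
  refine hσρ.lt_of_ne fun hρ => ?_
  rw [hσx, hρ] at hσH
  linarith [hmax σ hσP]

lemma add_mem_ascentSet (hf : Continuous f) {σ u : Fin N → ℝ}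
    (hσ : σ ∈ ascentSet a b H f κ c ρ x) (hu : σ + u ∈ Pset a b) (huσ : u ⬝ᵥ σ = 0)
    (hux : u ⬝ᵥ x = 0) (hρ : avgSq (σ - x) + avgSq u ≤ ρ)
    (hgain : κ * ∫ t in avgSq σ..avgSq σ + avgSq u, f t ≤ H (σ + u) - H σ + c * avgSq u) :
    σ + u ∈ ascentSet a b H f κ c ρ x := by
  obtain ⟨-, -, hσx, hσH⟩ := hσ
  have hsq : avgSq (σ + u) = avgSq σ + avgSq u := avgSq_add_of_dotProduct_eq_zero huσ
  have hsplit := intervalIntegral.integral_add_adjacent_intervals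
    (hf.intervalIntegrable (μ := MeasureTheory.volume) (avgSq x) (avgSq σ))
    (hf.intervalIntegrable _ (avgSq σ + avgSq u))
  refine ⟨hu, by rwa [avgSq_add_sub huσ hux], by rw [avgSq_add_sub huσ hux, hsq, hσx]; ring, ?_⟩
  rw [avgSq_add_sub huσ hux, hsq, ← hsplit]
  linarith

end AscentSet

section Ascent

variable {N : ℕ} {J : Type*} [Fintype J] {Pd : ℕ} {γ : ℕ → ℝ} {ε δ C : ℝ}
  {a : J → Fin N → ℝ} {b : J → ℝ} {H : (Fin N → ℝ) → ℝ}

lemma IsSuperb.exists_direction (hsup : IsSuperb Pd γ ε δ a b H) (hN : 0 < (N : ℝ))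
    {σ : Fin N → ℝ} (hσ : σ ∈ Pset a b) (hU : ε * N ≤ Module.finrank ℝ (Uspace a b σ))
    (x : Fin N → ℝ) :
    ∃ w ∈ Uspace a b σ, w ≠ 0 ∧ w ⬝ᵥ σ = 0 ∧ w ⬝ᵥ x = 0 ∧ 0 ≤ fderiv ℝ H σ w ∧
      ∀ s : ℝ, (2 * zeta Pd γ (avgSq σ) * √ε - δ) * avgSq (s • w) ≤
        iteratedFDeriv ℝ 2 H σ fun _ => s • w := by
  obtain ⟨V, hV2, hVU, hVσ, hVhess⟩ := hsup σ hσ σ hσ hU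
  obtain ⟨w, hwV, hw0, hwx, hgrad⟩ := V.exists_mem_ne_zero_eq_zero_nonneg (by omega)
    (dotProductBilin ℝ ℝ x) (fderiv ℝ H σ : (Fin N → ℝ) →ₗ[ℝ] ℝ)
  refine ⟨w, hVU hwV, hw0, hVσ w hwV, ?_, hgrad, fun s => ?_⟩
  · simpa [dotProduct_comm] using hwx
  · have hvec : ![s • w, s • w] = fun _ => s • w := by ext i; fin_cases i <;> rfl
    have := hVhess (s • w) (V.smul_mem s hwV)
    rw [hvec] at this
    unfold avgSq
    rw [← mul_div_assoc, div_le_iff₀' hN]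
    exact this

lemma IsSuperb.exists_ascent_step (hsup : IsSuperb Pd γ ε δ a b H) (hH : DerivBounds N C H)
    (hN : 0 < (N : ℝ)) (hball : Pset a b ⊆ {σ | avgSq σ ≤ 1}) {σ : Fin N → ℝ}
    (hσ : σ ∈ Pset a b) (hU : ε * N ≤ Module.finrank ℝ (Uspace a b σ)) (x : Fin N → ℝ)
    (hδ : 0 < δ) {m : ℝ} (hm : 0 < m) :
    ∃ u, σ + u ∈ Pset a b ∧ u ⬝ᵥ σ = 0 ∧ u ⬝ᵥ x = 0 ∧ 0 < avgSq u ∧ avgSq u ≤ m ∧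
      H σ + (√ε * zeta Pd γ (avgSq σ) - δ) * avgSq u ≤ H (σ + u) := by
  obtain ⟨w, hwU, hw0, hwσ, hwx, hgrad, hhess⟩ := hsup.exists_direction hN hσ hU x
  have hsmall : Tendsto (fun t : ℝ => avgSq (t • w)) (𝓝 0) (𝓝 0) :=
    (by fun_prop : Continuous fun t : ℝ => avgSq (t • w)).tendsto' 0 0 (by simp)
  have hcubic : Tendsto (fun t : ℝ => C * √(avgSq (t • w))) (𝓝 0) (𝓝 0) := by
    simpa using (hsmall.sqrt.const_mul C)
  -- `C √Δ < 3δ` keeps the cubic Taylor remainder `C Δ^{3/2} / 6` below `δΔ / 2`.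
  have hev : ∀ᶠ t in 𝓝 (0 : ℝ), σ + t • w ∈ Pset a b ∧ avgSq (t • w) < m ∧
      C * √(avgSq (t • w)) < 3 * δ :=
    (eventually_add_smul_mem_Pset hσ hwU).and ((hsmall.eventually_lt_const hm).and
      (hcubic.eventually_lt_const (by positivity)))
  obtain ⟨t, ⟨htP, htm, htC⟩, ht0 : 0 < t⟩ :=
    ((hev.filter_mono nhdsWithin_le_nhds).and (self_mem_nhdsWithin (s := Ioi 0))).exists
  set u := t • w
  have hΔ : 0 < avgSq u := avgSq_pos hN (smul_ne_zero ht0.ne' hw0)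
  refine ⟨u, htP, by simp [u, smul_dotProduct, hwσ], by simp [u, smul_dotProduct, hwx], hΔ,
    htm.le, ?_⟩
  have hseg (s : ℝ) (hs : s ∈ Icc (0 : ℝ) 1) : avgSq (σ + s • u) ≤ 1 :=
    hball ((convex_Pset a b).add_smul_mem hσ htP hs)
  have htaylor := hH.1.taylor_two_sub_le σ u fun s hs =>
    hH.abs_iteratedFDeriv_three_le hN (hseg s hs) u
  have hgrad' : 0 ≤ fderiv ℝ H σ u := by
    rw [map_smul, smul_eq_mul]; exact mul_nonneg ht0.le hgrad
  have hcube : C * √(avgSq u) ^ 3 ≤ 3 * δ * avgSq u := calc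
    C * √(avgSq u) ^ 3 = C * √(avgSq u) * avgSq u := by
      rw [pow_succ, Real.sq_sqrt hΔ.le]; ring
    _ ≤ 3 * δ * avgSq u := mul_le_mul_of_nonneg_right htC.le hΔ.le
  linarith [hhess t]

lemma IsSuperb.exists_farther_mem_ascentSet {ρ : ℝ} {x σ : Fin N → ℝ}
    (hsup : IsSuperb Pd γ ε δ a b H) (hH : DerivBounds N C H)
    (hN : 0 < (N : ℝ)) (hball : Pset a b ⊆ {σ | avgSq σ ≤ 1}) (hε : 0 < ε) (hδ : 0 < δ)
    (hσ : σ ∈ ascentSet a b H (zeta Pd γ) (√ε) (2 * δ) ρ x) (hσρ : avgSq (σ - x) < ρ)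
    (hU : ε * N ≤ Module.finrank ℝ (Uspace a b σ)) :
    ∃ σ' ∈ ascentSet a b H (zeta Pd γ) (√ε) (2 * δ) ρ x, avgSq (σ - x) < avgSq (σ' - x) := by
  have hζ := continuous_zeta Pd γ
  obtain ⟨Δ₀, hΔ₀, hint⟩ := hζ.exists_pos_intervalIntegral_le (avgSq σ)
    (ω := δ / √ε) (by positivity)
  obtain ⟨u, hσu, huσ, hux, hu0, hum, hgain⟩ := hsup.exists_ascent_step hH hN hball hσ.1 hU x
    hδ (m := min (ρ - avgSq (σ - x)) Δ₀) (lt_min (by linarith) hΔ₀)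
  have hΔ := hint (avgSq u) ⟨hu0.le, hum.trans (min_le_right _ _)⟩
  have hpaid : √ε * ∫ t in avgSq σ..avgSq σ + avgSq u, zeta Pd γ t ≤
      H (σ + u) - H σ + 2 * δ * avgSq u := calc
    _ ≤ √ε * ((zeta Pd γ (avgSq σ) + δ / √ε) * avgSq u) :=
        mul_le_mul_of_nonneg_left hΔ (Real.sqrt_nonneg ε)
    _ = (√ε * zeta Pd γ (avgSq σ) - δ) * avgSq u + 2 * δ * avgSq u := by field_simp; ring
    _ ≤ H (σ + u) - H σ + 2 * δ * avgSq u := by linarith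
  refine ⟨σ + u, add_mem_ascentSet hζ hσ hσu huσ hux
    (by linarith [hum.trans (min_le_left _ _)]) hpaid, ?_⟩
  rw [avgSq_add_sub huσ hux]
  linarith

end Ascent

theorem polytope_near_maximizers_near_corners_deterministic_general
    (Pd : ℕ) (γ : ℕ → ℝ)
    (ε ε' η C : ℝ) (hε : 0 < ε) (hε' : 0 < ε') (hη : 0 < η) :
    ∃ δ > (0 : ℝ), ∀ N : ℕ, 1 ≤ N →
      ∀ (J : Type) (_ : Fintype J) (a : J → Fin N → ℝ) (b : J → ℝ),
        Pset a b ⊆ {x : Fin N → ℝ | (∑ i, (x i) ^ 2) / N ≤ 1} →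
        ∀ H : (Fin N → ℝ) → ℝ, DerivBounds N C H → IsSuperb Pd γ ε δ a b H →
        ∀ x ∈ Pset a b,
          (∀ y ∈ Pset a b, H y ≤ H x +
            Real.sqrt ε * (∫ t in ((∑ i, (x i) ^ 2) / N)..((∑ i, (x i) ^ 2) / N + ε'),
              zeta Pd γ t) - η) →
          ∃ xhat ∈ Pset a b, (Module.finrank ℝ (Uspace a b xhat) : ℝ) < ε * N ∧
            (∑ i, (x i - xhat i) ^ 2) / N ≤ ε' := by
  refine ⟨η / (4 * ε'), by positivity, fun N hN J _ a b hball H hH hsup x hx hmax => ?_⟩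
  set δ := η / (4 * ε')
  have hδ : 0 < δ := by positivity
  have hN0 : (0 : ℝ) < N := by exact_mod_cast hN
  obtain ⟨σ, hσA, hσmax⟩ := (isCompact_ascentSet (κ := √ε) (c := 2 * δ) (ρ := ε') (x := x) hN0
    hball hH.1.continuous (continuous_zeta Pd γ)).exists_isMaxOn ⟨x, self_mem_ascentSet hx hε'.le⟩
    (f := fun σ => avgSq (σ - x)) (by fun_prop)
  have hσx : avgSq (σ - x) < ε' := avgSq_sub_lt_of_mem_ascentSet hmax
    (by rw [show 2 * δ * ε' = η / 2 by simp only [δ]; field_simp; ring]; linarith) hσA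
  refine ⟨σ, hσA.1, not_le.1 fun hU => ?_, (avgSq_sub_comm x σ).trans_le hσx.le⟩
  obtain ⟨σ', hσ', hfar⟩ := hsup.exists_farther_mem_ascentSet hH hN0 hball hε hδ hσA hσx hU
  exact (hσmax hσ').not_gt hfar

/-- deterministic form of Theorem 5 of the paper: for any mixture and
`ε, ε', η, C > 0` there is `δ > 0` such that for any `N ≥ 1`, any polytope presented by
half-spaces and contained in the unit ball, and any `(ε,δ)`-superb `H` with `C`-derivative
bounds, every `x` in the polytope with
`H(x) ≥ max_P H − √ε ∫_{|x|₂²}^{|x|₂²+ε'} ζ(t) dt + η` is within squared distance `ε'` of an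
`ε`-corner `xhat` (a point with `dim U(xhat) < εN`). (The near-maximality hypothesis is phrased
equivalently as a bound on `H(y)` for all `y` in the polytope.) -/
theorem polytope_near_maximizers_near_corners_deterministic
    (Pd : ℕ) (γ : ℕ → ℝ) (hγ : ∀ p, 0 ≤ γ p)
    (hmix : ∃ p, 2 ≤ p ∧ p ≤ Pd ∧ 0 < γ p)
    (ε ε' η C : ℝ) (hε : 0 < ε) (hε' : 0 < ε') (hη : 0 < η) (hC : 0 < C) :
    ∃ δ > (0 : ℝ), ∀ N : ℕ, 1 ≤ N →
      ∀ (J : Type) (_ : Fintype J) (a : J → Fin N → ℝ) (b : J → ℝ),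
        Pset a b ⊆ {x : Fin N → ℝ | (∑ i, (x i) ^ 2) / N ≤ 1} →
        ∀ H : (Fin N → ℝ) → ℝ, DerivBounds N C H → IsSuperb Pd γ ε δ a b H →
        ∀ x ∈ Pset a b,
          (∀ y ∈ Pset a b, H y ≤ H x +
            Real.sqrt ε * (∫ t in ((∑ i, (x i) ^ 2) / N)..((∑ i, (x i) ^ 2) / N + ε'),
              zeta Pd γ t) - η) →
          ∃ xhat ∈ Pset a b, (Module.finrank ℝ (Uspace a b xhat) : ℝ) < ε * N ∧
            (∑ i, (x i - xhat i) ^ 2) / N ≤ ε' :=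
  polytope_near_maximizers_near_corners_deterministic_general Pd γ ε ε' η C hε hε' hη
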